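/- Let $r_1,\dots,r_n \in (-1,1)$ and let $A_P$ be the $(2n+2)\times(2n+2)$ matrix implementing the scattering iteration: $(A_P)_{2j-3, 2j-1} = 1 + r_{j-1}$, $(A_P)_{2j, 2j-1} = -r_{j-1}$ for $2 \le j \le n+1$, and $(A_P)_{2j-1, 2j} = r_j$, $(A_P)_{2j+2, 2j} = 1 - r_j$ for $1 \le j \le n$, all other entries zero. Then every eigenvalue of $A_P$ has absolute value strictly less than $1$. -/

import Mathlib

open Matrix

/-- The iteration matrix `A_P` of the scattering algorithm, with 1-based
indices `i' = i+1`, `j' = j+1`: nonzero entries are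
`(A_P)_{2k-1,2k} = r k`, `(A_P)_{2k+2,2k} = 1 - r k`,
`(A_P)_{2k-1,2k+1} = 1 + r k`, `(A_P)_{2k+2,2k+1} = -(r k)` for `1 ≤ k ≤ n`. -/
def APent (n : ℕ) (r : ℕ → ℝ) : Matrix (Fin (2 * n + 2)) (Fin (2 * n + 2)) ℝ :=
  Matrix.of fun i j =>
    let i' := (i : ℕ) + 1
    let j' := (j : ℕ) + 1
    if j' % 2 = 0 then
      let k := j' / 2
      if k ≤ n ∧ i' = 2 * k - 1 then r k
      else if k ≤ n ∧ i' = 2 * k + 2 then 1 - r k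
      else 0
    else
      let k := (j' - 1) / 2
      if 1 ≤ k ∧ k ≤ n ∧ i' = 2 * k - 1 then 1 + r k
      else if 1 ≤ k ∧ k ≤ n ∧ i' = 2 * k + 2 then -(r k)
      else 0

lemma sum_pair_eq {N : ℕ} (f : Fin N → ℂ) (a b : Fin N) (hab : a ≠ b)
    (h : ∀ j, j ≠ a → j ≠ b → f j = 0) : ∑ j, f j = f a + f b := by
  rw [← Finset.sum_pair hab]
  refine (Finset.sum_subset (Finset.subset_univ _) ?_).symm
  intro j _ hj
  simp only [Finset.mem_insert, Finset.mem_singleton, not_or] at hj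
  exact h j hj.1 hj.2

lemma APent_row_odd (n : ℕ) (r : ℕ → ℝ) (k : ℕ) (hk1 : 1 ≤ k) (hkn : k ≤ n)
    (i j : Fin (2*n+2)) (hi : (i:ℕ) = 2*k-2) :
    APent n r i j = if (j:ℕ) = 2*k-1 then r k else if (j:ℕ) = 2*k then 1 + r k else 0 := by
  simp only [APent, Matrix.of_apply]
  split_ifs <;>
    first
    | rfl
    | (exfalso; omega)
    | (have h1 : ((j:ℕ)+1)/2 = k := by omega
       simp only [h1])
    | (have h2 : (((j:ℕ)+1)-1)/2 = k := by omega
       simp only [h2])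

lemma APent_row_even (n : ℕ) (r : ℕ → ℝ) (k : ℕ) (hk1 : 1 ≤ k) (hkn : k ≤ n)
    (i j : Fin (2*n+2)) (hi : (i:ℕ) = 2*k+1) :
    APent n r i j = if (j:ℕ) = 2*k-1 then 1 - r k else if (j:ℕ) = 2*k then -(r k) else 0 := by
  simp only [APent, Matrix.of_apply]
  split_ifs <;>
    first
    | rfl
    | (exfalso; omega)
    | (have h1 : ((j:ℕ)+1)/2 = k := by omega
       simp only [h1])
    | (have h2 : (((j:ℕ)+1)-1)/2 = k := by omega
       simp only [h2])

lemma APent_row_one (n : ℕ) (r : ℕ → ℝ) (i j : Fin (2*n+2)) (hi : (i:ℕ) = 1) :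
    APent n r i j = 0 := by
  simp only [APent, Matrix.of_apply]
  split_ifs <;> first | rfl | (exfalso; omega)

lemma APent_row_last (n : ℕ) (r : ℕ → ℝ) (i j : Fin (2*n+2)) (hi : (i:ℕ) = 2*n) :
    APent n r i j = 0 := by
  simp only [APent, Matrix.of_apply]
  split_ifs <;> first | rfl | (exfalso; omega)

lemma block_id (a : ℝ) (x y z w μ : ℂ)
    (h1 : (a:ℂ) * x + (1+(a:ℂ)) * y = μ * z)
    (h2 : (1-(a:ℂ)) * x - (a:ℂ) * y = μ * w) :
    (1-a) * (Complex.normSq μ * Complex.normSq z) + (1+a) * (Complex.normSq μ * Complex.normSq w)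
      = (1-a) * Complex.normSq x + (1+a) * Complex.normSq y := by
  have g1 := congrArg Complex.normSq h1
  have g2 := congrArg Complex.normSq h2
  simp only [Complex.normSq_apply, Complex.add_re, Complex.add_im, Complex.sub_re,
    Complex.sub_im, Complex.mul_re, Complex.mul_im, Complex.ofReal_re, Complex.ofReal_im,
    Complex.one_re, Complex.one_im] at g1 g2 ⊢
  linear_combination (a-1) * g1 - (1+a) * g2

set_option maxHeartbeats 1000000 in
theorem APent_spectrum_lt_one (n : ℕ) (hn : 1 ≤ n) (r : ℕ → ℝ)
    (hr : ∀ k ∈ Finset.Icc 1 n, r k ∈ Set.Ioo (-1 : ℝ) 1) :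
    ∀ μ ∈ spectrum ℂ ((APent n r).map (algebraMap ℝ ℂ)), ‖μ‖ < 1 := by
  intro μ hμ
  by_contra habs
  push_neg at habs
  have hμ0 : μ ≠ 0 := by
    intro h; rw [h] at habs; simp at habs; linarith
  have hm2 : 1 ≤ Complex.normSq μ := by
    rw [← Complex.sq_norm]; nlinarith
  set B := (APent n r).map (algebraMap ℝ ℂ) with hB
  rw [spectrum.mem_iff] at hμ
  have hdet : ((algebraMap ℂ (Matrix (Fin (2*n+2)) (Fin (2*n+2)) ℂ) μ) - B).det = 0 := by
    by_contra hd
    exact hμ ((Matrix.isUnit_iff_isUnit_det _).mpr (isUnit_iff_ne_zero.mpr hd))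
  obtain ⟨v, hv0, hveq⟩ := Matrix.exists_mulVec_eq_zero_iff.mpr hdet
  have heig : ∀ i, ∑ j, B i j * v j = μ * v i := by
    intro i
    have h0 := congrFun hveq i
    rw [Matrix.sub_mulVec, Algebra.algebraMap_eq_smul_one, Matrix.smul_mulVec,
      Matrix.one_mulVec] at h0
    simp only [Pi.sub_apply, Pi.smul_apply, smul_eq_mul, Pi.zero_apply] at h0
    have h1 : (B *ᵥ v) i = ∑ j, B i j * v j := by
      simp only [Matrix.mulVec, dotProduct]
    rw [h1] at h0
    exact (sub_eq_zero.mp h0).symm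
  set vv : ℕ → ℂ := fun t => if h : 1 ≤ t ∧ t - 1 < 2*n+2 then v ⟨t-1, h.2⟩ else 0 with hvvdef
  have hvvv : ∀ (j : Fin (2*n+2)), vv ((j:ℕ)+1) = v j := by
    intro j
    rw [hvvdef]
    exact dif_pos ⟨by omega, by exact j.isLt⟩
  -- entry values
  have hEnt : ∀ (i j : Fin (2*n+2)) (x : ℝ), APent n r i j = x → B i j = (x : ℂ) := by
    intro i j x hx
    rw [hB, Matrix.map_apply, hx]; rfl
  have hE1 : ∀ k, 1 ≤ k → k ≤ n →
      ((r k : ℝ) : ℂ) * vv (2*k) + ((1 + r k : ℝ) : ℂ) * vv (2*k+1) = μ * vv (2*k-1) := by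
    intro k hk1 hkn
    have hb1 : 2*k-1 < 2*n+2 := by omega
    have hb2 : 2*k < 2*n+2 := by omega
    have hb3 : 2*k-2 < 2*n+2 := by omega
    have hrow := heig ⟨2*k-2, hb3⟩
    rw [sum_pair_eq (fun j => B ⟨2*k-2, hb3⟩ j * v j) ⟨2*k-1, hb1⟩ ⟨2*k, hb2⟩
      (by simp only [ne_eq, Fin.mk.injEq]; omega)
      (fun j hja hjb => by
        have hz : APent n r ⟨2*k-2, hb3⟩ j = 0 := by
          rw [APent_row_odd n r k hk1 hkn _ _ rfl, if_neg, if_neg]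
          · exact fun h => hjb (Fin.ext h)
          · exact fun h => hja (Fin.ext h)
        simp only [hEnt _ _ _ hz, Complex.ofReal_zero, zero_mul])] at hrow
    beta_reduce at hrow
    rw [hEnt ⟨2*k-2, hb3⟩ ⟨2*k-1, hb1⟩ (r k)
        (by rw [APent_row_odd n r k hk1 hkn _ _ rfl, if_pos rfl]),
      hEnt ⟨2*k-2, hb3⟩ ⟨2*k, hb2⟩ (1 + r k)
        (by rw [APent_row_odd n r k hk1 hkn _ _ rfl, if_neg (show ¬(2*k = 2*k-1) from by omega), if_pos rfl])] at hrow
    have v1 : vv (2*k-1+1) = v ⟨2*k-1, hb1⟩ := hvvv ⟨2*k-1, hb1⟩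
    have v2 : vv (2*k+1) = v ⟨2*k, hb2⟩ := hvvv ⟨2*k, hb2⟩
    have v3 : vv (2*k-2+1) = v ⟨2*k-2, hb3⟩ := hvvv ⟨2*k-2, hb3⟩
    rw [show 2*k-1+1 = 2*k from by omega] at v1
    rw [show 2*k-2+1 = 2*k-1 from by omega] at v3
    rw [← v1, ← v2, ← v3] at hrow
    exact hrow
  have hrpos : ∀ j, 1 ≤ j → j ≤ n → -1 < r j ∧ r j < 1 := by
    intro j h1 h2
    have := hr j (Finset.mem_Icc.mpr ⟨h1, h2⟩)
    exact ⟨this.1, this.2⟩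
  have hE2 : ∀ k, 1 ≤ k → k ≤ n →
      (1 - ((r k : ℝ) : ℂ)) * vv (2*k) - ((r k : ℝ) : ℂ) * vv (2*k+1) = μ * vv (2*k+2) := by
    intro k hk1 hkn
    have hb1 : 2*k-1 < 2*n+2 := by omega
    have hb2 : 2*k < 2*n+2 := by omega
    have hb3 : 2*k+1 < 2*n+2 := by omega
    have hrow := heig ⟨2*k+1, hb3⟩
    rw [sum_pair_eq (fun j => B ⟨2*k+1, hb3⟩ j * v j) ⟨2*k-1, hb1⟩ ⟨2*k, hb2⟩
      (by simp only [ne_eq, Fin.mk.injEq]; omega)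
      (fun j hja hjb => by
        have hz : APent n r ⟨2*k+1, hb3⟩ j = 0 := by
          rw [APent_row_even n r k hk1 hkn _ _ rfl, if_neg, if_neg]
          · exact fun h => hjb (Fin.ext h)
          · exact fun h => hja (Fin.ext h)
        simp only [hEnt _ _ _ hz, Complex.ofReal_zero, zero_mul])] at hrow
    beta_reduce at hrow
    rw [hEnt ⟨2*k+1, hb3⟩ ⟨2*k-1, hb1⟩ (1 - r k)
        (by rw [APent_row_even n r k hk1 hkn _ _ rfl, if_pos rfl]),
      hEnt ⟨2*k+1, hb3⟩ ⟨2*k, hb2⟩ (-(r k))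
        (by rw [APent_row_even n r k hk1 hkn _ _ rfl, if_neg (show ¬(2*k = 2*k-1) from by omega), if_pos rfl])] at hrow
    have v1 : vv (2*k-1+1) = v ⟨2*k-1, hb1⟩ := hvvv ⟨2*k-1, hb1⟩
    have v2 : vv (2*k+1) = v ⟨2*k, hb2⟩ := hvvv ⟨2*k, hb2⟩
    have v3 : vv (2*k+2) = v ⟨2*k+1, hb3⟩ := hvvv ⟨2*k+1, hb3⟩
    rw [show 2*k-1+1 = 2*k from by omega] at v1
    rw [← v1, ← v2, ← v3] at hrow
    push_cast at hrow ⊢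
    linear_combination hrow
  have hE1' : ∀ k, 1 ≤ k → k ≤ n →
      ((r k : ℝ) : ℂ) * vv (2*k) + (1 + ((r k : ℝ) : ℂ)) * vv (2*k+1) = μ * vv (2*k-1) := by
    intro k hk1 hkn
    have := hE1 k hk1 hkn
    push_cast at this ⊢
    linear_combination this
  -- zero rows
  have hv2 : vv 2 = 0 := by
    have hb : (1:ℕ) < 2*n+2 := by omega
    have hrow := heig ⟨1, hb⟩
    rw [Finset.sum_eq_zero (fun j _ => by
      simp only [hEnt ⟨1, hb⟩ j 0 (APent_row_one n r _ j rfl), Complex.ofReal_zero, zero_mul])] at hrow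
    have h2 : vv 2 = v ⟨1, hb⟩ := hvvv ⟨1, hb⟩
    rcases mul_eq_zero.mp hrow.symm with h | h
    · exact absurd h hμ0
    · rw [h2, h]
  have hv2n1 : vv (2*n+1) = 0 := by
    have hb : 2*n < 2*n+2 := by omega
    have hrow := heig ⟨2*n, hb⟩
    rw [Finset.sum_eq_zero (fun j _ => by
      simp only [hEnt ⟨2*n, hb⟩ j 0 (APent_row_last n r _ j rfl), Complex.ofReal_zero, zero_mul])] at hrow
    have h2 : vv (2*n+1) = v ⟨2*n, hb⟩ := hvvv ⟨2*n, hb⟩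
    rcases mul_eq_zero.mp hrow.symm with h | h
    · exact absurd h hμ0
    · rw [h2, h]
  -- weights
  set m2 : ℝ := Complex.normSq μ with hm2def
  set N : ℕ → ℝ := fun t => Complex.normSq (vv t) with hNdef
  set P : ℕ → ℝ := fun k => ∏ j ∈ Finset.Icc 1 k, (1 + r j)/(1 - r j) with hPdef
  have hNnonneg : ∀ t, 0 ≤ N t := fun t => Complex.normSq_nonneg _
  have hPpos : ∀ k, k ≤ n → 0 < P k := by
    intro k hk
    rw [hPdef]
    apply Finset.prod_pos
    intro j hj
    rw [Finset.mem_Icc] at hj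
    have := hrpos j hj.1 (le_trans hj.2 hk)
    exact div_pos (by linarith) (by linarith)
  have hP0 : P 0 = 1 := by rw [hPdef]; simp
  have hPstep : ∀ k, 1 ≤ k → k ≤ n → P k * (1 - r k) = P (k-1) * (1 + r k) := by
    intro k hk1 hkn
    obtain ⟨m, rfl⟩ : ∃ m, k = m + 1 := ⟨k-1, by omega⟩
    have hprod := Finset.prod_Icc_succ_top (by omega : 1 ≤ m+1) (fun j => (1 + r j)/(1 - r j))
    have hrm := hrpos (m+1) (by omega) hkn
    have hne : (1:ℝ) - r (m+1) ≠ 0 := by linarith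
    rw [hPdef]
    simp only [Nat.add_sub_cancel]
    rw [hprod, mul_assoc, div_mul_cancel₀ _ hne]
  have hBlock : ∀ k ∈ Finset.Icc 1 n,
      m2 * (P (k-1) * N (2*k-1) + P k * N (2*k+2)) = P (k-1) * N (2*k) + P k * N (2*k+1) := by
    intro k hk
    rw [Finset.mem_Icc] at hk
    have hb := block_id (r k) (vv (2*k)) (vv (2*k+1)) (vv (2*k-1)) (vv (2*k+2)) μ
      (hE1' k hk.1 hk.2) (hE2 k hk.1 hk.2)
    have hstep := hPstep k hk.1 hk.2
    have hrm := hrpos k hk.1 hk.2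
    have hne : (1:ℝ) - r k ≠ 0 := by linarith
    have hcancel : (1 - r k) * (m2 * (P (k-1) * N (2*k-1) + P k * N (2*k+2)))
        = (1 - r k) * (P (k-1) * N (2*k) + P k * N (2*k+1)) := by
      rw [hNdef, hm2def]
      linear_combination P (k-1) * hb + (Complex.normSq μ * Complex.normSq (vv (2*k+2))
        - Complex.normSq (vv (2*k+1))) * hstep
    exact mul_left_cancel₀ hne hcancel
  have hsum := Finset.sum_congr rfl hBlock
  rw [← Finset.mul_sum] at hsum
  -- decompose sums
  set Sodd : ℝ := ∑ m ∈ Finset.Icc 1 (n+1), P (m-1) * N (2*m-1) with hSodd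
  set Sev : ℝ := ∑ m ∈ Finset.Icc 1 (n+1), P (m-1) * N (2*m) with hSev
  have hshift1 : ∑ m ∈ Finset.Icc 2 (n+1), P (m-1) * N (2*m-1)
      = ∑ k ∈ Finset.Icc 1 n, P k * N (2*k+1) := by
    rw [show (2:ℕ) = 1 + 1 from rfl, ← Finset.map_add_right_Icc 1 n 1, Finset.sum_map]
    apply Finset.sum_congr rfl
    intro k _
    simp only [addRightEmbedding_apply]
    rw [Nat.add_sub_cancel, show 2*(k+1)-1 = 2*k+1 from by omega]
  have hshift2 : ∑ m ∈ Finset.Icc 2 (n+1), P (m-1) * N (2*m)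
      = ∑ k ∈ Finset.Icc 1 n, P k * N (2*k+2) := by
    rw [show (2:ℕ) = 1 + 1 from rfl, ← Finset.map_add_right_Icc 1 n 1, Finset.sum_map]
    apply Finset.sum_congr rfl
    intro k _
    simp only [addRightEmbedding_apply]
    rw [Nat.add_sub_cancel, show 2*(k+1) = 2*k+2 from by ring]
  have hins : Finset.Icc 1 (n+1) = insert 1 (Finset.Icc 2 (n+1)) := by
    ext x
    simp only [Finset.mem_Icc, Finset.mem_insert]
    omega
  have hA : Sodd = (∑ k ∈ Finset.Icc 1 n, P (k-1) * N (2*k-1)) + P n * N (2*n+1) := by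
    rw [hSodd, Finset.sum_Icc_succ_top (by omega : 1 ≤ n+1)]
    rw [show 2*(n+1)-1 = 2*n+1 from by omega, Nat.add_sub_cancel]
  have hC : Sev = (∑ k ∈ Finset.Icc 1 n, P (k-1) * N (2*k)) + P n * N (2*n+2) := by
    rw [hSev, Finset.sum_Icc_succ_top (by omega : 1 ≤ n+1)]
    rw [show 2*(n+1) = 2*n+2 from by ring, Nat.add_sub_cancel]
  have hB2 : Sodd = P 0 * N 1 + ∑ k ∈ Finset.Icc 1 n, P k * N (2*k+1) := by
    rw [hSodd, hins, Finset.sum_insert (by simp), hshift1]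
  have hD : Sev = P 0 * N 2 + ∑ k ∈ Finset.Icc 1 n, P k * N (2*k+2) := by
    rw [hSev, hins, Finset.sum_insert (by simp), hshift2]
  have hN2 : N 2 = 0 := by rw [hNdef]; simp [hv2]
  have hN2n1 : N (2*n+1) = 0 := by rw [hNdef]; simp [hv2n1]
  rw [Finset.sum_add_distrib, Finset.sum_add_distrib] at hsum
  have hfinal : m2 * (Sodd + Sev) = (Sodd + Sev) - P 0 * N 1 - P n * N (2*n+2) := by
    have e1 : ∑ k ∈ Finset.Icc 1 n, P (k-1) * N (2*k-1) = Sodd := by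
      rw [hA, hN2n1]; ring
    have e2 : ∑ k ∈ Finset.Icc 1 n, P k * N (2*k+2) = Sev - P 0 * N 2 := by
      rw [hD]; ring
    have e3 : ∑ k ∈ Finset.Icc 1 n, P (k-1) * N (2*k) = Sev - P n * N (2*n+2) := by
      rw [hC]; ring
    have e4 : ∑ k ∈ Finset.Icc 1 n, P k * N (2*k+1) = Sodd - P 0 * N 1 := by
      rw [hB2]; ring
    rw [e1, e2, e3, e4, hN2] at hsum
    linarith [hsum]
  -- positivity of total
  obtain ⟨i0, hvi0⟩ := Function.ne_iff.mp hv0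
  have hvi0' : v i0 ≠ 0 := hvi0
  have hStot : 0 < Sodd + Sev := by
    rw [hSodd, hSev, ← Finset.sum_add_distrib]
    have hiLt := i0.isLt
    set m := ((i0:ℕ)+2)/2 with hm
    have hmmem : m ∈ Finset.Icc 1 (n+1) := Finset.mem_Icc.mpr ⟨by omega, by omega⟩
    have hNi : 0 < N ((i0:ℕ)+1) := by
      rw [hNdef]
      exact Complex.normSq_pos.mpr (by rw [hvvv]; exact hvi0')
    have hPm : 0 < P (m-1) := hPpos (m-1) (by omega)
    have hterm : 0 < P (m-1) * N (2*m-1) + P (m-1) * N (2*m) := by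
      rcases (show (i0:ℕ)+1 = 2*m-1 ∨ (i0:ℕ)+1 = 2*m from by omega) with h | h
      · have h5 : 0 ≤ P (m-1) * N (2*m) := mul_nonneg hPm.le (hNnonneg _)
        have h6 : 0 < P (m-1) * N (2*m-1) := by rw [h] at hNi; exact mul_pos hPm hNi
        linarith
      · have h5 : 0 ≤ P (m-1) * N (2*m-1) := mul_nonneg hPm.le (hNnonneg _)
        have h6 : 0 < P (m-1) * N (2*m) := by rw [h] at hNi; exact mul_pos hPm hNi
        linarith
    refine lt_of_lt_of_le hterm (Finset.single_le_sum (f := fun x => P (x-1) * N (2*x-1) + P (x-1) * N (2*x)) ?_ hmmem)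
    intro j hj
    have hj' := Finset.mem_Icc.mp hj
    exact add_nonneg (mul_nonneg (hPpos (j-1) (by omega)).le (hNnonneg _))
      (mul_nonneg (hPpos (j-1) (by omega)).le (hNnonneg _))
  -- conclude v1 = vlast = 0
  have hN1 : N 1 = 0 ∧ N (2*n+2) = 0 := by
    have hPn : 0 < P n := hPpos n le_rfl
    have h1 : 0 ≤ N 1 := hNnonneg 1
    have h2 : 0 ≤ N (2*n+2) := hNnonneg _
    rw [hP0] at hfinal
    have key : N 1 + P n * N (2*n+2) ≤ 0 := by
      nlinarith [mul_nonneg (by linarith : (0:ℝ) ≤ m2 - 1) hStot.le]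
    have hPN : 0 ≤ P n * N (2*n+2) := mul_nonneg hPn.le h2
    have hN1z : N 1 = 0 := le_antisymm (by linarith) h1
    have hN2z : P n * N (2*n+2) = 0 := le_antisymm (by linarith) hPN
    refine ⟨hN1z, ?_⟩
    rcases mul_eq_zero.mp hN2z with h | h
    · exact absurd h hPn.ne'
    · exact h
  have hvv1 : vv 1 = 0 := by
    have := hN1.1
    rw [hNdef] at this
    exact Complex.normSq_eq_zero.mp this
  have hvlast : vv (2*n+2) = 0 := by
    have := hN1.2
    rw [hNdef] at this
    exact Complex.normSq_eq_zero.mp this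
  -- forward induction kills the eigenvector
  have hind : ∀ k, k ≤ n → vv (2*k+1) = 0 ∧ vv (2*k+2) = 0 := by
    intro k
    induction k with
    | zero =>
      intro _
      constructor
      · simpa using hvv1
      · simpa using hv2
    | succ m ih =>
      intro hk
      obtain ⟨ha, hb⟩ := ih (by omega)
      have h1 := hE1' (m+1) (by omega) hk
      have h2 := hE2 (m+1) (by omega) hk
      have e : vv (2*(m+1)) = 0 := by rw [show 2*(m+1) = 2*m+2 from by ring]; exact hb
      have e' : vv (2*(m+1)-1) = 0 := by rw [show 2*(m+1)-1 = 2*m+1 from by omega]; exact ha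
      rw [e, e'] at h1
      have hco : (1 + ((r (m+1) : ℝ) : ℂ)) ≠ 0 := by
        have hrm := hrpos (m+1) (by omega) hk
        have : ((1 + r (m+1) : ℝ) : ℂ) ≠ 0 := by
          rw [Complex.ofReal_ne_zero]; linarith
        push_cast at this
        exact this
      have hx : vv (2*(m+1)+1) = 0 := by
        have h1' : (1 + ((r (m+1) : ℝ) : ℂ)) * vv (2*(m+1)+1) = 0 := by
          rw [mul_zero] at h1
          linear_combination h1
        rcases mul_eq_zero.mp h1' with h | h
        · exact absurd h hco
        · exact h
      rw [e, hx] at h2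
      have hy : vv (2*(m+1)+2) = 0 := by
        have h2' : μ * vv (2*(m+1)+2) = 0 := by linear_combination -h2
        rcases mul_eq_zero.mp h2' with h | h
        · exact absurd h hμ0
        · exact h
      exact ⟨hx, hy⟩
  apply hv0
  funext i
  show v i = 0
  rw [← hvvv i]
  have hiLt := i.isLt
  have hkle : (i:ℕ)/2 ≤ n := by omega
  rcases (show (i:ℕ) = 2*((i:ℕ)/2) ∨ (i:ℕ) = 2*((i:ℕ)/2)+1 from by omega) with h | h
  · rw [show (i:ℕ)+1 = 2*((i:ℕ)/2)+1 from by omega]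
    exact (hind _ hkle).1
  · rw [show (i:ℕ)+1 = 2*((i:ℕ)/2)+2 from by omega]
    exact (hind _ hkle).2
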